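/- In the task DAG with segments S_1,…,S_N of length L ≥ 2, suppose an oracle conditional-independence procedure is available that, for any (k, v, i), correctly returns whether s_{kL} and s_{vL} are dependent given Z_band(k,v,i), and suppose Theorem-level equivalence holds: this dependence holds iff task g_i is relevant to both S_k and S_v. Assume further that every task appears in at least two segments. Then the algorithm that, for each task g_i and each pair k < v, adds g_i to the task sets of both S_k and S_v exactly when the test returns dependence, outputs task sets T(S_k) that equal the true sets of tasks relevant to each segment. -/
import Mathlib

/-- Exact recovery of the temporal task structure by pairwise conditional-independence
tests. `Rel k i` means task `g_i` is truly relevant to segment `S_k`; `test k v i` is the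
oracle result of the dependence test of `s_{kL}` and `s_{vL}` given `Z_band(k,v,i)`. The
theorem-level equivalence says the test fires iff the task is relevant to both segments,
and every task appears in at least two segments. Then the algorithm that adds `g_i` to
the task sets of `S_k` and `S_v` exactly when the test returns dependence outputs, for
each segment, exactly the true set of relevant tasks. -/
theorem algorithm_recovers_task_structure {N M : ℕ}
    (Rel : Fin N → Fin M → Prop)
    (test : Fin N → Fin N → Fin M → Prop)
    (hiff : ∀ (k v : Fin N) (i : Fin M), k < v → (test k v i ↔ (Rel k i ∧ Rel v i)))
    (htwo : ∀ i : Fin M, ∃ k v : Fin N, k < v ∧ Rel k i ∧ Rel v i) :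
    ∀ k : Fin N,
      {i : Fin M | ∃ v : Fin N, (k < v ∧ test k v i) ∨ (v < k ∧ test v k i)}
        = {i : Fin M | Rel k i} := by
  intro k
  ext i
  simp only [Set.mem_setOf_eq]
  constructor
  · rintro ⟨v, ⟨hkv, ht⟩ | ⟨hvk, ht⟩⟩
    · exact ((hiff k v i hkv).mp ht).1
    · exact ((hiff v k i hvk).mp ht).2
  · intro hR
    obtain ⟨a, b, hab, ha, hb⟩ := htwo i
    rcases lt_trichotomy k a with h | h | h
    · exact ⟨a, Or.inl ⟨h, (hiff k a i h).mpr ⟨hR, ha⟩⟩⟩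
    · subst h
      exact ⟨b, Or.inl ⟨hab, (hiff k b i hab).mpr ⟨hR, hb⟩⟩⟩
    · exact ⟨a, Or.inr ⟨h, (hiff a k i h).mpr ⟨ha, hR⟩⟩⟩
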